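/- Let 𝒱 be a variety of groups defined by a set of words V and let 1 → N →^χ G →^π Q → 1 be a marginal extension, i.e., χ(N) ⊆ V*(G). Then this sequence is a VP extension if and only if χ(N) ∩ T(G) = {1}. -/

import Mathlib

/-! Common framework: varieties of groups, verbal and marginal subgroups,
word values, the `B̃₀`-invariant of a group with respect to a variety. -/

universe u v

open scoped commutatorElement

/-- The set `T(G)` of values in `G` of the words in `V`. -/
def wordValues (V : Set (FreeGroup ℕ)) (G : Type*) [Group G] : Set G :=
  {g | ∃ v ∈ V, ∃ f : ℕ → G, FreeGroup.lift f v = g}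

/-- The verbal subgroup `V(G)`, generated by all values in `G` of words of `V`. -/
def verbal (V : Set (FreeGroup ℕ)) (G : Type*) [Group G] : Subgroup G :=
  Subgroup.closure (wordValues V G)

/-- The verbal subgroup `V(B)` of a subgroup `B` of `G`, viewed as a subgroup of `G`:
it is generated by all values of words of `V` at tuples of elements of `B`. -/
def verbalOn (V : Set (FreeGroup ℕ)) {G : Type*} [Group G] (B : Subgroup G) : Subgroup G :=
  Subgroup.closure {g | ∃ v ∈ V, ∃ f : ℕ → G, (∀ n, f n ∈ B) ∧ FreeGroup.lift f v = g}

/-- The marginal subgroup `V*(G)`: those `a` such that replacing any entry `gᵢ` of any tuple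
by `gᵢ * a` does not change the value of any word of `V`. -/
def marginal (V : Set (FreeGroup ℕ)) (G : Type*) [Group G] : Subgroup G where
  carrier := {a | ∀ v ∈ V, ∀ f : ℕ → G, ∀ i : ℕ,
    FreeGroup.lift (Function.update f i (f i * a)) v = FreeGroup.lift f v}
  one_mem' := by
    intro v hv f i
    rw [mul_one, Function.update_eq_self]
  mul_mem' := by
    intro a b ha hb v hv f i
    have h1 := hb v hv (Function.update f i (f i * a)) i
    rw [Function.update_self, Function.update_idem] at h1
    rw [← mul_assoc]
    exact h1.trans (ha v hv f i)
  inv_mem' := by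
    intro a ha v hv f i
    have h1 := ha v hv (Function.update f i (f i * a⁻¹)) i
    rw [Function.update_self, Function.update_idem, inv_mul_cancel_right,
      Function.update_eq_self] at h1
    exact h1.symm

lemma FreeGroup.lift_conj {α : Type*} {G : Type*} [Group G] (f : α → G) (c : G)
    (w : FreeGroup α) :
    FreeGroup.lift (fun n => c * f n * c⁻¹) w = c * FreeGroup.lift f w * c⁻¹ := by
  have h : (FreeGroup.lift (fun n => c * f n * c⁻¹) : FreeGroup α →* G)
      = ((MulAut.conj c).toMonoidHom.comp (FreeGroup.lift f)) := by
    apply FreeGroup.ext_hom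
    intro a
    simp
  rw [h]
  simp

lemma Subgroup.closure_normal_of_conj {G : Type*} [Group G] {S : Set G}
    (hS : ∀ c : G, ∀ g ∈ S, c * g * c⁻¹ ∈ S) : (Subgroup.closure S).Normal := by
  constructor
  intro x hx c
  induction hx using Subgroup.closure_induction with
  | mem g hg => exact Subgroup.subset_closure (hS c g hg)
  | one => simpa using (Subgroup.closure S).one_mem
  | mul a b _ _ pa pb =>
      have h : c * (a * b) * c⁻¹ = (c * a * c⁻¹) * (c * b * c⁻¹) := by group
      rw [h]; exact mul_mem pa pb
  | inv a _ pa =>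
      have h : c * a⁻¹ * c⁻¹ = (c * a * c⁻¹)⁻¹ := by group
      rw [h]; exact inv_mem pa

lemma wordValues_conj_mem {V : Set (FreeGroup ℕ)} {G : Type*} [Group G]
    (c : G) {g : G} (hg : g ∈ wordValues V G) : c * g * c⁻¹ ∈ wordValues V G := by
  obtain ⟨v, hv, f, rfl⟩ := hg
  exact ⟨v, hv, fun n => c * f n * c⁻¹, FreeGroup.lift_conj f c v⟩

/-- The canonical free presentation `1 → R → F → G → 1` of `G`, with
`F = FreeGroup G` the free group on the underlying set of `G`. -/
def presHom (G : Type*) [Group G] : FreeGroup G →* G := FreeGroup.lift id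

/-- The relation subgroup `R` of the canonical free presentation of `G`. -/
def presKer (G : Type*) [Group G] : Subgroup (FreeGroup G) := (presHom G).ker

/-- The numerator `R ∩ V(F)` of the `B̃₀`-invariant. -/
def vB0Num (V : Set (FreeGroup ℕ)) (G : Type*) [Group G] : Subgroup (FreeGroup G) :=
  presKer G ⊓ verbal V (FreeGroup G)

/-- The denominator `⟨T(F) ∩ R⟩` of the `B̃₀`-invariant. -/
def vB0Den (V : Set (FreeGroup ℕ)) (G : Type*) [Group G] : Subgroup (FreeGroup G) :=
  Subgroup.closure (wordValues V (FreeGroup G) ∩ (presKer G : Set (FreeGroup G)))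

lemma vB0Den_normal (V : Set (FreeGroup ℕ)) (G : Type*) [Group G] : (vB0Den V G).Normal := by
  apply Subgroup.closure_normal_of_conj
  rintro c g ⟨hg1, hg2⟩
  exact ⟨wordValues_conj_mem c hg1, (presHom G).normal_ker.conj_mem g hg2 c⟩

instance vB0DenSubgroupOf_normal (V : Set (FreeGroup ℕ)) (G : Type*) [Group G] :
    ((vB0Den V G).subgroupOf (vB0Num V G)).Normal :=
  (vB0Den_normal V G).subgroupOf _

/-- The `B̃₀`-invariant `𝒱B̃₀(G) = (R ∩ V(F)) / ⟨T(F) ∩ R⟩` of `G` with respect to the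
variety defined by the set of words `V`, computed from the canonical free presentation. -/
def vB0 (V : Set (FreeGroup ℕ)) (G : Type*) [Group G] : Type _ :=
  ↥(vB0Num V G) ⧸ (vB0Den V G).subgroupOf (vB0Num V G)

instance (V : Set (FreeGroup ℕ)) (G : Type*) [Group G] : Group (vB0 V G) :=
  inferInstanceAs (Group (↥(vB0Num V G) ⧸ (vB0Den V G).subgroupOf (vB0Num V G)))

/-- A variety defined by a set of words `V` is a Schur-Baer variety if, for every group `G`
whose marginal factor `G/V*(G)` is finite (of order `m = [G : V*(G)]`), the verbal subgroup
`V(G)` is finite of order dividing a power of `m`. -/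
def IsSchurBaer (V : Set (FreeGroup ℕ)) : Prop :=
  ∀ (G : Type u) [Group G], (marginal V G).FiniteIndex →
    Finite (verbal V G) ∧ ∃ k : ℕ, Nat.card (verbal V G) ∣ (marginal V G).index ^ k

/-- Outer commutator words: `IsOCWord a b w` means that `w` is an outer commutator word
in the (distinct) variables `x_a, x_{a+1}, …, x_{b-1}` (so of weight `b - a`).
`IsOCWord 0 r w` means `w = w(x₁,…,x_r)` is an outer commutator word of weight `r`. -/
inductive IsOCWord : ℕ → ℕ → FreeGroup ℕ → Prop
  | var (i : ℕ) : IsOCWord i (i + 1) (FreeGroup.of i)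
  | comm {a b c : ℕ} {u v : FreeGroup ℕ} :
      IsOCWord a b u → IsOCWord b c v → IsOCWord a c ⁅u, v⁆

/-- Given an outer commutator word `w = w(x₁,…,x_r)` (in variables `x_0,…,x_{r-1}`),
the set of laws `{[w(x₁,…,x_r), x_{r+1}, x_{r+2}]}` defining the
center-by-center-by-`w` variety. -/
def ocVariety (w : FreeGroup ℕ) (r : ℕ) : Set (FreeGroup ℕ) :=
  {⁅⁅w, FreeGroup.of r⁆, FreeGroup.of (r + 1)⁆}

/-- The lifting condition of a VP extension: any trivial word (a value of a word of `V`
which equals `1`) of elements of the quotient has a trivial lift. -/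
def HasVPLifts (V : Set (FreeGroup ℕ)) {G Q : Type*} [Group G] [Group Q] (π : G →* Q) : Prop :=
  ∀ v ∈ V, ∀ q : ℕ → Q, FreeGroup.lift q v = 1 →
    ∃ g : ℕ → G, (∀ i, π (g i) = q i) ∧ FreeGroup.lift g v = 1

/-- `1 → L → G* → Q → 1` is a VP cover of `Q` (with respect to the variety defined by `V`):
a `𝒱`-stem marginal VP extension with `L ≅ 𝒱B̃₀(Q)`. Here `L` is realized as a subgroup
of `G*` and `π : G* → Q` is the projection. -/
structure IsVPCover (V : Set (FreeGroup ℕ)) {Gs : Type*} {Q : Type*} [Group Gs] [Group Q]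
    (L : Subgroup Gs) (π : Gs →* Q) : Prop where
  surj : Function.Surjective π
  ker_eq : π.ker = L
  marginal_le : L ≤ marginal V Gs
  stem : L ≤ verbal V Gs
  lifts : HasVPLifts V π
  iso : Nonempty (L ≃* vB0 V Q)

/-- The single commutator word `[x₁, x₂]` defining the variety of abelian groups. -/
def commutatorWord : Set (FreeGroup ℕ) := {⁅FreeGroup.of 0, FreeGroup.of 1⁆}

/-- The Bogomolov multiplier `B̃₀(G) = (R ∩ [F,F]) / ⟨K(F) ∩ R⟩`: the `B̃₀`-invariant with
respect to the variety of abelian groups (then the verbal subgroup of the free group `F` is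
its derived subgroup `[F,F]` and the set of word values is the set `K(F)` of commutators). -/
def B0tilde (G : Type*) [Group G] : Type _ := vB0 commutatorWord G

instance (G : Type*) [Group G] : Group (B0tilde G) := inferInstanceAs (Group (vB0 commutatorWord G))

/-! Lifting a relation `v(q₁,…,q_s) = 1` arbitrarily gives a value of `v` lying in the kernel,
so a trivial kernel intersection yields trivial lifts. Conversely, since the kernel is marginal,
moving the arguments of `v` within their cosets (one variable at a time, and only the finitely
many variables of `v` matter) does not change its value: every lift of a relation has the value
of the trivial lift, namely `1`. -/

theorem FreeGroup.apply_lift {α G H : Type*} [Group G] [Group H] (φ : G →* H) (f : α → G)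
    (w : FreeGroup α) : φ (FreeGroup.lift f w) = FreeGroup.lift (φ ∘ f) w :=
  FreeGroup.lift_unique (φ.comp (FreeGroup.lift f)) (by simp)

theorem FreeGroup.lift_congr {α G : Type*} [DecidableEq α] [Group G] {f g : α → G}
    {w : FreeGroup α} (h : ∀ p ∈ w.toWord, f p.1 = g p.1) : FreeGroup.lift f w = FreeGroup.lift g w := by
  rw [← FreeGroup.mk_toWord (x := w), FreeGroup.lift_mk, FreeGroup.lift_mk]
  exact congrArg _ (List.map_congr_left fun p hp => by rw [h p hp])

theorem lift_mul_eq_of_mem_marginal {V : Set (FreeGroup ℕ)} {G : Type*} [Group G]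
    {v : FreeGroup ℕ} (hv : v ∈ V) (f a : ℕ → G) (ha : ∀ n, a n ∈ marginal V G) :
    FreeGroup.lift (fun n => f n * a n) v = FreeGroup.lift f v := by
  have partial_mul : ∀ s : Finset ℕ,
      FreeGroup.lift (fun n => if n ∈ s then f n * a n else f n) v = FreeGroup.lift f v := by
    intro s
    induction s using Finset.induction_on with
    | empty => simp
    | insert i s hi ih =>
      rw [← ih, ← ha i v hv (fun n => if n ∈ s then f n * a n else f n) i]
      congr 2
      funext n
      by_cases hn : n = i
      · subst hn; simp [hi]
      · simp [hn]
  rw [← partial_mul (v.toWord.map Prod.fst).toFinset]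
  exact FreeGroup.lift_congr fun p hp => by
    simp [List.mem_toFinset.mpr (List.mem_map_of_mem (f := Prod.fst) hp)]

section VPLifts

variable {V : Set (FreeGroup ℕ)} {G Q : Type*} [Group G] [Group Q] {π : G →* Q}

theorem HasVPLifts.eq_one_of_mem_ker (hlifts : HasVPLifts V π) (hmarg : π.ker ≤ marginal V G)
    {x : G} (hker : x ∈ π.ker) (hx : x ∈ wordValues V G) : x = 1 := by
  obtain ⟨v, hv, f, rfl⟩ := hx
  have hrel : FreeGroup.lift (π ∘ f) v = 1 := by rw [← FreeGroup.apply_lift]; exact hker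
  obtain ⟨g, hg, hg1⟩ := hlifts v hv (π ∘ f) hrel
  have hcoset : ∀ n, (g n)⁻¹ * f n ∈ marginal V G := fun n =>
    hmarg (by rw [MonoidHom.mem_ker, map_mul, map_inv, hg n, Function.comp_apply, inv_mul_cancel])
  calc FreeGroup.lift f v = FreeGroup.lift (fun n => g n * ((g n)⁻¹ * f n)) v := by
        simp only [mul_inv_cancel_left]
    _ = 1 := by rw [lift_mul_eq_of_mem_marginal hv g _ hcoset, hg1]

theorem hasVPLifts_of_ker_inter_wordValues (hsurj : Function.Surjective π)
    (htriv : ∀ x ∈ π.ker, x ∈ wordValues V G → x = 1) : HasVPLifts V π := by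
  intro v hv q hq
  choose g hg using fun i => hsurj (q i)
  refine ⟨g, hg, htriv _ ?_ ⟨v, hv, g, rfl⟩⟩
  rw [MonoidHom.mem_ker, FreeGroup.apply_lift, show π ∘ g = q from funext hg, hq]

theorem hasVPLifts_iff_ker_inter_wordValues (hsurj : Function.Surjective π)
    (hmarg : π.ker ≤ marginal V G) :
    HasVPLifts V π ↔ ∀ x ∈ π.ker, x ∈ wordValues V G → x = 1 :=
  ⟨fun h _ => h.eq_one_of_mem_ker hmarg, hasVPLifts_of_ker_inter_wordValues hsurj⟩

end VPLifts

theorem stmt11_general (V : Set (FreeGroup ℕ)) {N G Q : Type*} [Group N] [Group G] [Group Q]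
    (χ : N →* G) (π : G →* Q)
    (hsurj : Function.Surjective π)
    (hexact : χ.range = π.ker)
    (hmarg : χ.range ≤ marginal V G) :
    HasVPLifts V π ↔ (∀ x ∈ χ.range, x ∈ wordValues V G → x = 1) := by
  rw [hexact] at hmarg ⊢
  exact hasVPLifts_iff_ker_inter_wordValues hsurj hmarg

/-- Proposition 4.5 of [1]. Let `1 → N →^χ G →^π Q → 1` be a marginal
extension (an extension with `χ(N) ⊆ V*(G)`). It is a VP extension if and only if
`χ(N) ∩ T(G) = 1`. -/
theorem stmt11 (V : Set (FreeGroup ℕ)) {N G Q : Type*} [Group N] [Group G] [Group Q]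
    (χ : N →* G) (π : G →* Q)
    (hinj : Function.Injective χ) (hsurj : Function.Surjective π)
    (hexact : χ.range = π.ker)
    (hmarg : χ.range ≤ marginal V G) :
    HasVPLifts V π ↔ (∀ x ∈ χ.range, x ∈ wordValues V G → x = 1) :=
  stmt11_general V χ π hsurj hexact hmarg
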